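/- arXiv:2004.13620 — 3 statements merged into one kernel-verified Lean document; each statement's English description precedes it below -/
import Mathlib

section
/- Let β, γ > 0 and let S, I, R : [0,∞) → ℝ be differentiable functions satisfying S'(t) = −β I(t) S(t), I'(t) = β I(t) S(t) − γ I(t) and R'(t) = γ I(t) for all t ≥ 0, with S(t) ≥ 0 and I(t) ≥ 0 for all t ≥ 0 and S(t) + I(t) + R(t) = 1 for all t ≥ 0. Then I(t) → 0 as t → ∞. -/
open Filter

/-- **Extinction of the infection in the SIR model.** For the classical SIR dynamics
`S' = -β I S`, `I' = β I S - γ I`, `R' = γ I` with nonnegative `S, I` and total mass 1,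
the infectious fraction tends to zero as `t → ∞`. -/
theorem sir_infected_tendsto_zero (β γ : ℝ) (hβ : 0 < β) (hγ : 0 < γ)
    (S I R : ℝ → ℝ)
    (hS : ∀ t ≥ (0:ℝ), HasDerivAt S (-β * I t * S t) t)
    (hI : ∀ t ≥ (0:ℝ), HasDerivAt I (β * I t * S t - γ * I t) t)
    (hR : ∀ t ≥ (0:ℝ), HasDerivAt R (γ * I t) t)
    (hSpos : ∀ t ≥ (0:ℝ), 0 ≤ S t)
    (hIpos : ∀ t ≥ (0:ℝ), 0 ≤ I t)
    (hsum : ∀ t ≥ (0:ℝ), S t + I t + R t = 1) :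
    Tendsto I atTop (nhds 0) := by
  -- R ≤ 1 on [0, ∞)
  have hR1 : ∀ t ≥ (0:ℝ), R t ≤ 1 := by
    intro t ht
    have := hsum t ht
    nlinarith [hSpos t ht, hIpos t ht]
  -- S is antitone on [0, ∞)
  have hSanti : AntitoneOn S (Set.Ici (0:ℝ)) := by
    apply antitoneOn_of_deriv_nonpos (convex_Ici 0)
    · intro x hx; exact (hS x hx).continuousAt.continuousWithinAt
    · intro x hx
      rw [interior_Ici] at hx
      exact ((hS x hx.le).differentiableAt).differentiableWithinAt
    · intro x hx
      rw [interior_Ici] at hx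
      rw [(hS x hx.le).deriv]
      have h1 := hIpos x hx.le; have h2 := hSpos x hx.le
      nlinarith [mul_nonneg (mul_nonneg hβ.le h1) h2]
  -- R is monotone on [0, ∞)
  have hRmono : MonotoneOn R (Set.Ici (0:ℝ)) := by
    apply monotoneOn_of_deriv_nonneg (convex_Ici 0)
    · intro x hx; exact (hR x hx).continuousAt.continuousWithinAt
    · intro x hx
      rw [interior_Ici] at hx
      exact ((hR x hx.le).differentiableAt).differentiableWithinAt
    · intro x hx
      rw [interior_Ici] at hx
      rw [(hR x hx.le).deriv]
      exact mul_nonneg hγ.le (hIpos x hx.le)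
  -- S converges
  set Sg : ℝ → ℝ := fun t => S (max t 0) with hSg
  have hSgAnti : Antitone Sg := fun a b hab =>
    hSanti (Set.mem_Ici.2 (le_max_right a 0)) (Set.mem_Ici.2 (le_max_right b 0))
      (max_le_max hab le_rfl)
  have hSgBdd : BddBelow (Set.range Sg) := by
    refine ⟨0, ?_⟩
    rintro _ ⟨t, rfl⟩
    exact hSpos _ (le_max_right t 0)
  have hSgEq : Sg =ᶠ[atTop] S := by
    filter_upwards [eventually_ge_atTop (0:ℝ)] with t ht
    simp [hSg, max_eq_left ht]
  have hStends : Tendsto S atTop (nhds (⨅ t, Sg t)) :=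
    (tendsto_atTop_ciInf hSgAnti hSgBdd).congr' hSgEq
  -- R converges
  set Rg : ℝ → ℝ := fun t => R (max t 0) with hRg
  have hRgMono : Monotone Rg := fun a b hab =>
    hRmono (Set.mem_Ici.2 (le_max_right a 0)) (Set.mem_Ici.2 (le_max_right b 0))
      (max_le_max hab le_rfl)
  have hRgBdd : BddAbove (Set.range Rg) := by
    refine ⟨1, ?_⟩
    rintro _ ⟨t, rfl⟩
    exact hR1 _ (le_max_right t 0)
  have hRgEq : Rg =ᶠ[atTop] R := by
    filter_upwards [eventually_ge_atTop (0:ℝ)] with t ht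
    simp [hRg, max_eq_left ht]
  have hRtends : Tendsto R atTop (nhds (⨆ t, Rg t)) :=
    (tendsto_atTop_ciSup hRgMono hRgBdd).congr' hRgEq
  -- hence I converges to L
  set L : ℝ := 1 - (⨅ t, Sg t) - (⨆ t, Rg t) with hL
  have hItends : Tendsto I atTop (nhds L) := by
    have : Tendsto (fun t => 1 - S t - R t) atTop (nhds L) := by
      simpa [hL] using (tendsto_const_nhds.sub hStends).sub hRtends
    refine this.congr' ?_
    filter_upwards [eventually_ge_atTop (0:ℝ)] with t ht
    have := hsum t ht; linarith
  -- L ≥ 0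
  have hLnonneg : 0 ≤ L := by
    refine le_of_tendsto_of_tendsto tendsto_const_nhds hItends ?_
    filter_upwards [eventually_ge_atTop (0:ℝ)] with t ht
    exact hIpos t ht
  -- L = 0
  rcases hLnonneg.lt_or_eq with hLpos | hLzero
  · exfalso
    -- eventually I t ≥ L/2
    obtain ⟨T, hT⟩ := ((hItends.eventually (eventually_gt_nhds (half_lt_self hLpos))).and
      (eventually_ge_atTop (0:ℝ))).exists_forall_of_atTop
    have hT0 : (0:ℝ) ≤ T := (hT T le_rfl).2
    -- φ t = R t - γ*(L/2)*t is monotone on [T, ∞)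
    set φ : ℝ → ℝ := fun t => R t - γ * (L / 2) * t with hφ
    have hφmono : MonotoneOn φ (Set.Ici T) := by
      apply monotoneOn_of_deriv_nonneg (convex_Ici T)
      · intro x hx
        exact (((hR x (hT0.trans hx)).sub
          ((hasDerivAt_id x).const_mul (γ * (L / 2)))).continuousAt).continuousWithinAt
      · intro x hx
        rw [interior_Ici] at hx
        exact ((hR x (hT0.trans hx.le)).sub
          ((hasDerivAt_id x).const_mul (γ * (L / 2)))).differentiableAt.differentiableWithinAt
      · intro x hx
        rw [interior_Ici] at hx
        have hd : HasDerivAt φ (γ * I x - γ * (L / 2) * 1) x :=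
          (hR x (hT0.trans hx.le)).sub ((hasDerivAt_id x).const_mul (γ * (L / 2)))
        rw [hd.deriv]
        have := (hT x hx.le).1
        nlinarith
    -- contradiction at t = T + (2 - R T) / (γ * (L/2))
    set c : ℝ := γ * (L / 2) with hc
    have hcpos : 0 < c := by positivity
    set t : ℝ := T + (2 - R T) / c with ht
    have hRT1 : R T ≤ 1 := hR1 T hT0
    have htT : T ≤ t := by
      have : 0 ≤ (2 - R T) / c := div_nonneg (by linarith) hcpos.le
      rw [ht]; linarith
    have := hφmono (Set.self_mem_Ici) (Set.mem_Ici.2 htT) htT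
    have hct : c * (t - T) = 2 - R T := by
      rw [ht]; field_simp; ring
    have hRt1 : R t ≤ 1 := hR1 t (hT0.trans htT)
    simp only [hφ] at this
    nlinarith
  · rw [← hLzero] at hItends
    exact hItends
end

section
/- Let β, γ > 0 and let S, I, R : [0,∞) → ℝ be differentiable functions satisfying S'(t) = −β I(t) S(t), I'(t) = β I(t) S(t) − γ I(t) and R'(t) = γ I(t) for all t ≥ 0, with S(0) > 0, I(0) > 0, S(t) ≥ 0 and I(t) ≥ 0 for all t ≥ 0, and S(t) + I(t) + R(t) = 1 for all t ≥ 0. Then there exists S^∞ with 0 < S^∞ ≤ γ/β such that S(t) → S^∞ as t → ∞, and S^∞ satisfies the final-size equation I(0) + S(0) − S^∞ + (γ/β)·log( S^∞ / S(0) ) = 0. -/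
open Filter

/-- **Final size relation for the SIR model.** For the classical SIR dynamics with
`S(0) > 0`, `I(0) > 0`, the susceptible fraction converges to a limit
`S^∞ ∈ (0, γ/β]` satisfying the final-size equation
`I(0) + S(0) - S^∞ + (γ/β) log(S^∞/S(0)) = 0`. -/
theorem sir_final_size (β γ : ℝ) (hβ : 0 < β) (hγ : 0 < γ)
    (S I R : ℝ → ℝ)
    (hS : ∀ t ≥ (0:ℝ), HasDerivAt S (-β * I t * S t) t)
    (hI : ∀ t ≥ (0:ℝ), HasDerivAt I (β * I t * S t - γ * I t) t)
    (hR : ∀ t ≥ (0:ℝ), HasDerivAt R (γ * I t) t)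
    (hS0 : 0 < S 0) (hI0 : 0 < I 0)
    (hSpos : ∀ t ≥ (0:ℝ), 0 ≤ S t)
    (hIpos : ∀ t ≥ (0:ℝ), 0 ≤ I t)
    (hsum : ∀ t ≥ (0:ℝ), S t + I t + R t = 1) :
    ∃ Sinf : ℝ, 0 < Sinf ∧ Sinf ≤ γ / β ∧ Tendsto S atTop (nhds Sinf) ∧
      I 0 + S 0 - Sinf + γ / β * Real.log (Sinf / S 0) = 0 := by
  have hγ' : γ ≠ 0 := hγ.ne'
  have hβ' : β ≠ 0 := hβ.ne'
  set c : ℝ := β / γ with hc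
  have hcγ : c * γ = β := div_mul_cancel₀ β hγ'
  have hcpos : 0 < c := div_pos hβ hγ
  -- continuity
  have hRcont : ContinuousOn R (Set.Ici 0) := fun x hx =>
    ((hR x hx).continuousAt).continuousWithinAt
  -- R is monotone on [0, ∞)
  have hRmono : MonotoneOn R (Set.Ici 0) := by
    apply monotoneOn_of_hasDerivWithinAt_nonneg (convex_Ici 0) hRcont
      (f' := fun t => γ * I t)
    · intro x hx
      rw [interior_Ici] at hx
      exact ((hR x (le_of_lt hx)).hasDerivWithinAt)
    · intro x hx
      rw [interior_Ici] at hx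
      exact mul_nonneg hγ.le (hIpos x (le_of_lt hx))
  -- R ≤ 1
  have hR1 : ∀ t ≥ (0:ℝ), R t ≤ 1 := by
    intro t ht
    have := hsum t ht
    have := hSpos t ht; have := hIpos t ht
    linarith
  -- key: S t * exp (c * R t) is constant
  have hKey : ∀ t ≥ (0:ℝ), S t * Real.exp (c * R t) = S 0 * Real.exp (c * R 0) := by
    intro t ht
    have hcont : ContinuousOn (fun x => S x * Real.exp (c * R x)) (Set.Icc 0 t) := by
      intro x hx
      exact (((hS x hx.1).continuousAt).mul
        (Real.continuous_exp.continuousAt.comp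
          (((hR x hx.1).continuousAt).const_smul c))).continuousWithinAt
    have hderiv : ∀ x ∈ Set.Ico (0:ℝ) t,
        HasDerivWithinAt (fun x => S x * Real.exp (c * R x)) 0 (Set.Ici x) x := by
      intro x hx
      have hd : HasDerivAt (fun x => S x * Real.exp (c * R x))
          ((-β * I x * S x) * Real.exp (c * R x)
            + S x * (Real.exp (c * R x) * (c * (γ * I x)))) x :=
        (hS x hx.1).mul (((hR x hx.1).const_mul c).exp)
      have hval : (-β * I x * S x) * Real.exp (c * R x)
            + S x * (Real.exp (c * R x) * (c * (γ * I x))) = 0 := by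
        have : c * (γ * I x) = β * I x := by rw [← mul_assoc, hcγ]
        rw [this]; ring
      rw [hval] at hd
      exact hd.hasDerivWithinAt
    exact constant_of_has_deriv_right_zero hcont hderiv t ⟨ht, le_rfl⟩
  -- explicit formula for S
  have hSform : ∀ t ≥ (0:ℝ), S t = S 0 * Real.exp (c * (R 0 - R t)) := by
    intro t ht
    have h := hKey t ht
    have hexp : Real.exp (c * R t) ≠ 0 := (Real.exp_pos _).ne'
    have : S t = S 0 * Real.exp (c * R 0) / Real.exp (c * R t) := by
      field_simp at h ⊢; linarith [h]
    rw [this, mul_sub, Real.exp_sub]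
    ring
  have hSpos' : ∀ t ≥ (0:ℝ), 0 < S t := by
    intro t ht
    rw [hSform t ht]
    positivity
  -- convergence of R
  set R' : ℝ → ℝ := fun t => R (max t 0) with hR'
  have hR'mono : Monotone R' := fun a b hab =>
    hRmono (le_max_right a 0) (le_max_right b 0) (max_le_max hab le_rfl)
  have hR'bdd : BddAbove (Set.range R') := by
    refine ⟨1, ?_⟩
    rintro _ ⟨t, rfl⟩
    exact hR1 _ (le_max_right t 0)
  set Rinf : ℝ := ⨆ t, R' t with hRinf
  have hR'tend : Tendsto R' atTop (nhds Rinf) := tendsto_atTop_ciSup hR'mono hR'bdd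
  have hRR' : R =ᶠ[atTop] R' := by
    filter_upwards [eventually_ge_atTop (0:ℝ)] with t ht
    simp [hR', max_eq_left ht]
  have hRtend : Tendsto R atTop (nhds Rinf) := hR'tend.congr' hRR'.symm
  have hRleRinf : ∀ t ≥ (0:ℝ), R t ≤ Rinf := by
    intro t ht
    have : R' t ≤ Rinf := le_ciSup hR'bdd t
    simpa [hR', max_eq_left ht] using this
  -- convergence of S
  set Sinf : ℝ := S 0 * Real.exp (c * (R 0 - Rinf)) with hSinf
  have hSinfPos : 0 < Sinf := by positivity
  have hStend : Tendsto S atTop (nhds Sinf) := by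
    have h1 : Tendsto (fun t => S 0 * Real.exp (c * (R 0 - R t))) atTop (nhds Sinf) := by
      refine Tendsto.const_mul _ ?_
      exact (Real.continuous_exp.tendsto _).comp
        ((tendsto_const_nhds.sub hRtend).const_mul c)
    refine h1.congr' ?_
    filter_upwards [eventually_ge_atTop (0:ℝ)] with t ht
    exact (hSform t ht).symm
  -- convergence of I
  set Iinf : ℝ := 1 - Sinf - Rinf with hIinf
  have hItend : Tendsto I atTop (nhds Iinf) := by
    have h1 : Tendsto (fun t => 1 - S t - R t) atTop (nhds Iinf) :=
      (tendsto_const_nhds.sub hStend).sub hRtend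
    refine h1.congr' ?_
    filter_upwards [eventually_ge_atTop (0:ℝ)] with t ht
    have := hsum t ht; linarith
  have hIinf_nonneg : 0 ≤ Iinf := by
    refine le_of_tendsto_of_tendsto tendsto_const_nhds hItend ?_
    filter_upwards [eventually_ge_atTop (0:ℝ)] with t ht
    exact hIpos t ht
  -- I → 0
  have hIinf0 : Iinf = 0 := by
    by_contra h
    have hIinfpos : 0 < Iinf := lt_of_le_of_ne hIinf_nonneg (Ne.symm h)
    have hev : ∀ᶠ t in atTop, Iinf / 2 ≤ I t :=
      hItend.eventually (eventually_ge_nhds (by linarith))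
    obtain ⟨T₀, hT₀⟩ := hev.exists_forall_of_atTop
    set T : ℝ := max T₀ 0 with hT
    have hTnn : (0:ℝ) ≤ T := le_max_right _ _
    have hIT : ∀ t ≥ T, Iinf / 2 ≤ I t := fun t ht => hT₀ t (le_trans (le_max_left _ _) ht)
    set a : ℝ := γ * (Iinf / 2) with ha
    have hapos : 0 < a := by positivity
    -- g := R - a·t is monotone on [T,∞)
    have hg : MonotoneOn (fun t => R t - a * t) (Set.Ici T) := by
      apply monotoneOn_of_hasDerivWithinAt_nonneg (convex_Ici T)
        (f' := fun t => γ * I t - a)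
      · intro x hx
        exact (((hR x (le_trans hTnn hx)).continuousAt).sub
          ((continuous_const.mul continuous_id).continuousAt)).continuousWithinAt
      · intro x hx
        rw [interior_Ici] at hx
        have hd : HasDerivAt (fun t => R t - a * t) (γ * I x - a) x := by
          have h2 : HasDerivAt (fun t : ℝ => a * t) a x := by
            simpa using (hasDerivAt_id x).const_mul a
          exact (hR x (le_trans hTnn hx.le)).sub h2
        exact hd.hasDerivWithinAt
      · intro x hx
        rw [interior_Ici] at hx
        have := hIT x hx.le
        rw [ha]
        nlinarith
    set t₁ : ℝ := T + (2 - R T) / a with ht₁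
    have hRT1 : R T ≤ 1 := hR1 T hTnn
    have hT1 : T ≤ t₁ := by
      rw [ht₁]
      have : 0 ≤ (2 - R T) / a := div_nonneg (by linarith) hapos.le
      linarith
    have hgle : R T - a * T ≤ R t₁ - a * t₁ := hg (Set.self_mem_Ici) hT1 hT1
    have : R t₁ ≥ R T + a * (t₁ - T) := by linarith
    have ht₁val : a * (t₁ - T) = 2 - R T := by
      rw [ht₁]; field_simp; ring
    have hcontra : R t₁ ≥ 2 := by rw [ht₁val] at this; linarith
    have := hR1 t₁ (le_trans hTnn hT1)
    linarith
  -- Sinf ≤ γ/β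
  have hSinfle : Sinf ≤ γ / β := by
    by_contra h
    push_neg at h
    have hSge : ∀ t ≥ (0:ℝ), Sinf ≤ S t := by
      intro t ht
      rw [hSform t ht, hSinf]
      have : Real.exp (c * (R 0 - Rinf)) ≤ Real.exp (c * (R 0 - R t)) := by
        apply Real.exp_le_exp.mpr
        have := hRleRinf t ht
        nlinarith
      nlinarith [Real.exp_pos (c * (R 0 - Rinf)), hS0]
    -- I is nondecreasing on [0,∞)
    have hImono : MonotoneOn I (Set.Ici (0:ℝ)) := by
      apply monotoneOn_of_hasDerivWithinAt_nonneg (convex_Ici 0)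
        (f' := fun t => β * I t * S t - γ * I t)
      · exact fun x hx => ((hI x hx).continuousAt).continuousWithinAt
      · intro x hx
        rw [interior_Ici] at hx
        exact (hI x hx.le).hasDerivWithinAt
      · intro x hx
        rw [interior_Ici] at hx
        have h1 := hIpos x hx.le
        have h2 := hSge x hx.le
        have h3 : γ / β < S x := lt_of_lt_of_le h h2
        have h4 : γ < β * S x := by
          rw [div_lt_iff₀ hβ] at h3; linarith [h3]
        nlinarith
    have hIge : ∀ᶠ t in atTop, I 0 ≤ I t := by
      filter_upwards [eventually_ge_atTop (0:ℝ)] with t ht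
      exact hImono Set.self_mem_Ici ht ht
    have : I 0 ≤ Iinf := le_of_tendsto_of_tendsto tendsto_const_nhds hItend hIge
    rw [hIinf0] at this
    linarith
  -- final size equation
  refine ⟨Sinf, hSinfPos, hSinfle, hStend, ?_⟩
  have hRinfval : Rinf = 1 - Sinf := by rw [hIinf] at hIinf0; linarith
  have hlog : Real.log (Sinf / S 0) = c * (R 0 - Rinf) := by
    have h1 : Sinf / S 0 = Real.exp (c * (R 0 - Rinf)) := by
      rw [hSinf, mul_comm (S 0), mul_div_assoc, div_self hS0.ne', mul_one]
    rw [h1, Real.log_exp]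
  rw [hlog]
  have h0 := hsum 0 le_rfl
  have hcc : γ / β * c = 1 := by field_simp; linarith [hcγ]
  have : γ / β * (c * (R 0 - Rinf)) = R 0 - Rinf := by
    rw [← mul_assoc, hcc, one_mul]
  rw [this, hRinfval]
  linarith
end

section
/- Let λ > 0, σ > 0, ρ > 0 and m > 0. Set μ = 1 + 2λ/σ and κ = (μ−1)·m/ρ, and define f : (0,∞) → ℝ by f(w) = ρ · (κ^μ/Γ(μ)) · e^{−κ/w} · w^{−(1+μ)}. Then f satisfies the stationary Fokker–Planck equation: for every w > 0, λ · d/dw[ (w − m/ρ) · f(w) ] + (σ/2) · d²/dw²[ w² · f(w) ] = 0, where all derivatives exist in the classical sense. -/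
/-! The density satisfies more than the stationary equation: its probability flux
`λ (w - m/ρ) f + (σ/2) (w² f)'` vanishes identically. Indeed `(w² f)' = (κ + (1 - μ) w) f`
for the inverse Gamma profile, and the choices `μ - 1 = 2λ/σ`, `κ = (μ - 1) m/ρ` make
`(σ/2)(κ + (1 - μ) w) = -λ (w - m/ρ)`. Differentiating the zero flux once more gives the
equation. -/

open Real Filter Set

lemma hasDerivAt_exp_neg_div_mul_rpow (κ p : ℝ) {w : ℝ} (hw : 0 < w) :
    HasDerivAt (fun u => exp (-κ / u) * u ^ p)
      ((κ + p * w) / w ^ 2 * (exp (-κ / w) * w ^ p)) w := by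
  have hexp : HasDerivAt (fun u => exp (-κ / u)) (exp (-κ / w) * (κ / w ^ 2)) w := by
    have h := ((hasDerivAt_inv hw.ne').const_mul (-κ)).exp
    simp only [← div_eq_mul_inv] at h
    exact h.congr_deriv (by ring)
  refine (hexp.mul (hasDerivAt_rpow_const (Or.inl hw.ne'))).congr_deriv ?_
  rw [rpow_sub_one hw.ne']
  field_simp

lemma hasDerivAt_of_forall_eq_exp_neg_div_mul_rpow {f : ℝ → ℝ} {C κ p : ℝ}
    (hf : ∀ u > 0, f u = C * exp (-κ / u) * u ^ p) {w : ℝ} (hw : 0 < w) :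
    HasDerivAt f ((κ + p * w) / w ^ 2 * f w) w := by
  have hfw : f =ᶠ[nhds w] fun u => C * (exp (-κ / u) * u ^ p) :=
    eventually_of_mem (Ioi_mem_nhds hw) fun u hu => (hf u hu).trans (mul_assoc _ _ _)
  refine (((hasDerivAt_exp_neg_div_mul_rpow κ p hw).const_mul C).congr_of_eventuallyEq
    hfw).congr_deriv ?_
  rw [hf w hw]
  ring

lemma hasDerivAt_sq_mul_of_forall_eq_exp_neg_div_mul_rpow {f : ℝ → ℝ} {C κ p : ℝ}
    (hf : ∀ u > 0, f u = C * exp (-κ / u) * u ^ p) {w : ℝ} (hw : 0 < w) :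
    HasDerivAt (fun u => u ^ 2 * f u) ((κ + (p + 2) * w) * f w) w := by
  refine ((hasDerivAt_pow 2 w).mul
    (hasDerivAt_of_forall_eq_exp_neg_div_mul_rpow hf hw)).congr_deriv ?_
  field_simp
  ring

lemma hasDerivAt_sq_mul_eq_neg_drift {lam σ m ρ μ κ C : ℝ} {f : ℝ → ℝ}
    (hμ : μ = 1 + 2 * lam / σ) (hκ : κ = (μ - 1) * m / ρ)
    (hf : ∀ u > 0, f u = C * exp (-κ / u) * u ^ (-(1 + μ))) {w : ℝ} (hw : 0 < w) :
    HasDerivAt (fun u => u ^ 2 * f u) (-(2 * lam / σ) * ((w - m / ρ) * f w)) w := by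
  refine (hasDerivAt_sq_mul_of_forall_eq_exp_neg_div_mul_rpow hf hw).congr_deriv ?_
  subst hκ hμ
  ring

theorem inverseGamma_stationary_FokkerPlanck_general (lam σ ρ m : ℝ)
    (hσ : 0 < σ)
    (μ κ : ℝ) (hμdef : μ = 1 + 2 * lam / σ) (hκdef : κ = (μ - 1) * m / ρ)
    (f : ℝ → ℝ)
    (hfdef : ∀ w > (0:ℝ),
      f w = ρ * (κ ^ μ / Real.Gamma μ) * Real.exp (-κ / w) * w ^ (-(1 + μ))) :
    ∀ w > (0:ℝ),
      DifferentiableAt ℝ (fun u => (u - m / ρ) * f u) w ∧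
      DifferentiableAt ℝ (fun u => u ^ 2 * f u) w ∧
      DifferentiableAt ℝ (deriv fun u => u ^ 2 * f u) w ∧
      lam * deriv (fun u => (u - m / ρ) * f u) w
        + σ / 2 * deriv (deriv fun u => u ^ 2 * f u) w = 0 := by
  intro w hw
  have hflux := fun u (hu : 0 < u) =>
    hasDerivAt_sq_mul_eq_neg_drift hμdef hκdef hfdef hu
  have hdrift : DifferentiableAt ℝ (fun u => (u - m / ρ) * f u) w :=
    (differentiableAt_id.sub_const _).mul
      (hasDerivAt_of_forall_eq_exp_neg_div_mul_rpow hfdef hw).differentiableAt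
  have hderiv : deriv (fun u => u ^ 2 * f u) =ᶠ[nhds w]
      fun u => -(2 * lam / σ) * ((u - m / ρ) * f u) :=
    eventually_of_mem (Ioi_mem_nhds hw) fun u hu => (hflux u hu).deriv
  refine ⟨hdrift, (hflux w hw).differentiableAt,
    (hdrift.const_mul _).congr_of_eventuallyEq hderiv, ?_⟩
  rw [hderiv.deriv_eq, deriv_const_mul _ hdrift]
  field_simp
  ring

/-- **The inverse Gamma density is a stationary solution of the wealth Fokker–Planck
equation.** With `μ = 1 + 2λ/σ` and `κ = (μ-1)m/ρ`, the function
`f(w) = ρ (κ^μ/Γ(μ)) e^{-κ/w} w^{-(1+μ)}` satisfies, for every `w > 0`,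
`λ d/dw[(w - m/ρ) f(w)] + (σ/2) d²/dw²[w² f(w)] = 0`,
all derivatives existing in the classical sense. -/
theorem inverseGamma_stationary_FokkerPlanck (lam σ ρ m : ℝ)
    (hlam : 0 < lam) (hσ : 0 < σ) (hρ : 0 < ρ) (hm : 0 < m)
    (μ κ : ℝ) (hμdef : μ = 1 + 2 * lam / σ) (hκdef : κ = (μ - 1) * m / ρ)
    (f : ℝ → ℝ)
    (hfdef : ∀ w > (0:ℝ),
      f w = ρ * (κ ^ μ / Real.Gamma μ) * Real.exp (-κ / w) * w ^ (-(1 + μ))) :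
    ∀ w > (0:ℝ),
      DifferentiableAt ℝ (fun u => (u - m / ρ) * f u) w ∧
      DifferentiableAt ℝ (fun u => u ^ 2 * f u) w ∧
      DifferentiableAt ℝ (deriv fun u => u ^ 2 * f u) w ∧
      lam * deriv (fun u => (u - m / ρ) * f u) w
        + σ / 2 * deriv (deriv fun u => u ^ 2 * f u) w = 0 :=
  inverseGamma_stationary_FokkerPlanck_general lam σ ρ m hσ μ κ hμdef hκdef f hfdef
end
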